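/- Let n ≥ 1 and let α_0, …, α_n > 0 be real numbers. Suppose c lies in the hyperplane H_0 = {x ∈ ℝ^{n+1} : Σ_{i=0}^n x_i = 0} and r > 0 are such that the polytope D = conv{x ∈ A_n : q_α(x − c) = r} has affine dimension n and q_α(x − c) ≥ r for every x ∈ A_n (i.e., D is a Delaunay polytope of the lattice A_n with respect to the metric q_α). Then there exist s ∈ {1, …, n} and a vector z ∈ ℝ^{n+1} such that D = z + J(n+1,s). In particular, up to translation, the Delaunay polytopes of A_n with respect to q_α are exactly the polytopes J(n+1,s) for 1 ≤ s ≤ n. -/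

import Mathlib

open Finset

noncomputable section

/-- The lattice `A_n = {x ∈ ℤ^{n+1} : Σ x_i = 0}`, viewed inside `ℝ^{n+1}`. -/
def latticeA (n : ℕ) : Set (Fin (n+1) → ℝ) :=
  {x | (∀ i, ∃ m : ℤ, x i = m) ∧ ∑ i, x i = 0}

/-- The vertex set `W(n+1,s) = {x ∈ {0,1}^{n+1} : Σ x_i = s}`. -/
def Wset (n s : ℕ) : Set (Fin (n+1) → ℝ) :=
  {x | (∀ i, x i = 0 ∨ x i = 1) ∧ ∑ i, x i = (s : ℝ)}

/-- The quadratic form `q_α(x) = Σ α_i x_i²`. -/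
def qForm {n : ℕ} (α : Fin (n+1) → ℝ) (x : Fin (n+1) → ℝ) : ℝ :=
  ∑ i, α i * (x i) ^ 2

/-!
Testing the empty-ellipsoid condition at the lattice neighbour `x + e_j - e_i` of a vertex `x`
gives `α_i (2 (x_i - c_i) - 1) ≤ α_j (2 (x_j - c_j) + 1)`. Adding this inequality for two vertices
shows that no coordinate of two vertices differs by more than `1`, so all vertices lie in a unit
cube `z + {0,1}^{n+1}`, and full dimensionality forces every coordinate to take both values.
Inside the cube the inequality says `β_p ≤ β_q` whenever some vertex is on top in coordinate `p`
and at the bottom in coordinate `q`, where `β_k = α_k (2 (z_k - c_k) + 1)`; comparing a vertex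
on top at the argmax of `β` with one at the bottom at the argmin shows that `β` is constant.
Since `q_α(z + w - c) = q_α(z - c) + Σ β_k w_k` for `w ∈ {0,1}^{n+1}`, every such `w` with the
right coordinate sum then gives a vertex `z + w`.
-/

open Pointwise

def latticeSphere (n : ℕ) (α c : Fin (n+1) → ℝ) (r : ℝ) : Set (Fin (n+1) → ℝ) :=
  {x ∈ latticeA n | qForm α (x - c) = r}

theorem sum_eq_card_of_forall_eq_zero_or_eq_one {ι : Type*} [Fintype ι] {w : ι → ℝ}
    (hw : ∀ k, w k = 0 ∨ w k = 1) : ∑ k, w k = #{k | w k = 1} := by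
  rw [← sum_boole]
  refine sum_congr rfl fun k _ => ?_
  rcases hw k with h | h <;> simp [h]

theorem exists_lt_of_sum_eq_of_lt {ι : Type*} [Fintype ι] {x y : ι → ℝ}
    (hsum : ∑ k, x k = ∑ k, y k) {i : ι} (hi : y i < x i) : ∃ j, x j < y j := by
  by_contra! h
  exact (sum_lt_sum (fun k _ => h k) ⟨i, mem_univ i, hi⟩).ne hsum.symm

theorem Int.exists_forall_eq_or_eq_add_one {T : Set ℤ} (hT : ∀ a ∈ T, ∀ b ∈ T, a ≤ b + 1) :
    ∃ m : ℤ, ∀ a ∈ T, a = m ∨ a = m + 1 := by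
  rcases T.eq_empty_or_nonempty with rfl | ⟨a, ha⟩
  · exact ⟨0, by simp⟩
  obtain ⟨m, hmT, hmin⟩ :=
    Int.exists_least_of_bdd (P := (· ∈ T)) ⟨a - 1, fun b hb => by linarith [hT a ha b hb]⟩ ⟨a, ha⟩
  exact ⟨m, fun b hb => by have := hmin b hb; have := hT b hb m hmT; omega⟩

section Quadratic

variable {n : ℕ}

theorem qForm_add (α x v : Fin (n+1) → ℝ) :
    qForm α (x + v) = qForm α x + ∑ k, α k * v k * (2 * x k + v k) := by
  rw [qForm, qForm, ← sum_add_distrib]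
  exact sum_congr rfl fun k _ => by simp only [Pi.add_apply]; ring

theorem qForm_add_single_sub_single (α x : Fin (n+1) → ℝ) {i j : Fin (n+1)} (hij : i ≠ j) :
    qForm α (x + (Pi.single j 1 - Pi.single i 1)) =
      qForm α x + α j * (2 * x j + 1) + α i * (1 - 2 * x i) := by
  rw [qForm_add, add_assoc, Fintype.sum_eq_add j i hij.symm]
  · simp only [Pi.sub_apply, Pi.single_eq_same, Pi.single_eq_of_ne hij, Pi.single_eq_of_ne hij.symm]
    ring
  · rintro k ⟨hkj, hki⟩
    simp [hkj, hki]

theorem qForm_add_of_forall_eq_zero_or_eq_one (α x : Fin (n+1) → ℝ) {w : Fin (n+1) → ℝ}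
    (hw : ∀ k, w k = 0 ∨ w k = 1) :
    qForm α (x + w) = qForm α x + ∑ k, α k * (2 * x k + 1) * w k := by
  rw [qForm_add]
  congr 1
  exact sum_congr rfl fun k _ => by rcases hw k with h | h <;> simp [h]

theorem add_single_sub_single_mem_latticeA {x : Fin (n+1) → ℝ} (hx : x ∈ latticeA n)
    (i j : Fin (n+1)) : x + (Pi.single j 1 - Pi.single i 1) ∈ latticeA n := by
  refine ⟨fun k => ?_, by simp [sum_add_distrib, sum_sub_distrib, hx.2]⟩
  obtain ⟨m, hm⟩ := hx.1 k
  refine ⟨m + (Pi.single j 1 - Pi.single i 1 : Fin (n+1) → ℤ) k, ?_⟩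
  simp only [Pi.add_apply, Pi.sub_apply, Pi.single_apply, hm]
  split_ifs <;> push_cast <;> ring

end Quadratic

section Vertices

variable {n : ℕ} {α c : Fin (n+1) → ℝ} {r : ℝ}

theorem exchange_le_of_mem_latticeSphere (hempty : ∀ x ∈ latticeA n, r ≤ qForm α (x - c))
    {x : Fin (n+1) → ℝ} (hx : x ∈ latticeSphere n α c r) {i j : Fin (n+1)} (hij : i ≠ j) :
    α i * (2 * (x i - c i) - 1) ≤ α j * (2 * (x j - c j) + 1) := by
  have h := hempty _ (add_single_sub_single_mem_latticeA hx.1 i j)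
  rw [add_sub_right_comm, qForm_add_single_sub_single _ _ hij, hx.2] at h
  simp only [Pi.sub_apply] at h
  linarith

theorem le_add_one_of_mem_latticeSphere (hα : ∀ i, 0 < α i)
    (hempty : ∀ x ∈ latticeA n, r ≤ qForm α (x - c)) {x y : Fin (n+1) → ℝ}
    (hx : x ∈ latticeSphere n α c r) (hy : y ∈ latticeSphere n α c r) (i : Fin (n+1)) :
    x i ≤ y i + 1 := by
  by_contra! hi
  obtain ⟨j, hj⟩ := exists_lt_of_sum_eq_of_lt (hx.1.2.trans hy.1.2.symm) (by linarith : y i < x i)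
  have hij : i ≠ j := by rintro rfl; linarith
  obtain ⟨a, ha⟩ := hx.1.1 i
  obtain ⟨b, hb⟩ := hy.1.1 i
  obtain ⟨a', ha'⟩ := hx.1.1 j
  obtain ⟨b', hb'⟩ := hy.1.1 j
  have hi2 : y i + 2 ≤ x i := by
    rw [ha, hb] at hi ⊢
    have : b + 1 < a := by exact_mod_cast hi
    exact_mod_cast (by omega : b + 2 ≤ a)
  have hj1 : x j + 1 ≤ y j := by
    rw [ha', hb'] at hj ⊢
    exact_mod_cast (by exact_mod_cast hj : a' < b')
  nlinarith [exchange_le_of_mem_latticeSphere hempty hx hij,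
    exchange_le_of_mem_latticeSphere hempty hy hij.symm,
    mul_pos (hα i) (show 0 < x i - y i - 1 by linarith),
    mul_nonneg (hα j).le (show 0 ≤ y j - x j - 1 by linarith)]

theorem exists_forall_mem_latticeSphere_eq_or_eq_add_one (hα : ∀ i, 0 < α i)
    (hempty : ∀ x ∈ latticeA n, r ≤ qForm α (x - c)) :
    ∃ z : Fin (n+1) → ℝ, (∀ k, ∃ m : ℤ, z k = m) ∧
      ∀ v ∈ latticeSphere n α c r, ∀ k, v k = z k ∨ v k = z k + 1 := by
  have h (k : Fin (n+1)) := Int.exists_forall_eq_or_eq_add_one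
    (T := {a : ℤ | ∃ v ∈ latticeSphere n α c r, v k = a}) <| by
      rintro _ ⟨x, hx, hxk⟩ _ ⟨y, hy, hyk⟩
      exact_mod_cast hxk ▸ hyk ▸ le_add_one_of_mem_latticeSphere hα hempty hx hy k
  choose z hz using h
  refine ⟨fun k => z k, fun k => ⟨z k, rfl⟩, fun v hv k => ?_⟩
  obtain ⟨a, ha⟩ := hv.1.1 k
  rcases hz k a ⟨v, hv, ha⟩ with rfl | rfl <;> simp [ha]

theorem exists_forall_weight_eq (hempty : ∀ x ∈ latticeA n, r ≤ qForm α (x - c))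
    {z : Fin (n+1) → ℝ} (hbox : ∀ v ∈ latticeSphere n α c r, ∀ k, v k = z k ∨ v k = z k + 1)
    (hlow : ∀ k, ∃ v ∈ latticeSphere n α c r, v k = z k)
    (hhigh : ∀ k, ∃ v ∈ latticeSphere n α c r, v k = z k + 1) :
    ∃ b, ∀ k, α k * (2 * (z k - c k) + 1) = b := by
  set β := fun k => α k * (2 * (z k - c k) + 1)
  have hexch : ∀ v ∈ latticeSphere n α c r, ∀ p q, v p = z p + 1 → v q = z q → β p ≤ β q := by
    intro v hv p q hp hq
    have hpq : p ≠ q := by rintro rfl; linarith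
    have := exchange_le_of_mem_latticeSphere hempty hv hpq
    rw [hp, hq] at this
    simp only [β]
    linarith
  obtain ⟨M, -, hM⟩ := exists_max_image univ β univ_nonempty
  obtain ⟨m, -, hm⟩ := exists_min_image univ β univ_nonempty
  suffices β M ≤ β m from
    ⟨β m, fun k => le_antisymm ((hM k (mem_univ k)).trans this) (hm k (mem_univ k))⟩
  obtain ⟨v, hv, hvM⟩ := hhigh M
  obtain ⟨w, hw, hwm⟩ := hlow m
  rcases hbox v hv m with hvm | hvm
  · exact hexch v hv M m hvM hvm
  obtain ⟨k, hk⟩ := exists_lt_of_sum_eq_of_lt (hv.1.2.trans hw.1.2.symm) (by linarith : w m < v m)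
  have hvk : v k = z k := (hbox v hv k).resolve_right fun h => by
    rcases hbox w hw k with h' | h' <;> linarith
  have hwk : w k = z k + 1 := (hbox w hw k).resolve_left fun h => by linarith
  exact (hexch v hv M k hvM hvk).trans (hexch w hw k m hwk hwm)

end Vertices

section Dimension

variable {n : ℕ}

theorem finrank_vectorSpan_lt_of_forall_eq (hn : 1 ≤ n) {S : Set (Fin (n+1) → ℝ)}
    (hS : ∀ x ∈ S, ∑ i, x i = 0) (k : Fin (n+1)) (t : ℝ) (hk : ∀ x ∈ S, x k = t) :
    Module.finrank ℝ (vectorSpan ℝ S) < n := by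
  let σ : (Fin (n+1) → ℝ) →ₗ[ℝ] ℝ := ∑ i, LinearMap.proj i
  have hσ (v : Fin (n+1) → ℝ) : σ v = ∑ i, v i := by simp [σ, LinearMap.sum_apply]
  let K := LinearMap.ker (LinearMap.proj k : (Fin (n+1) → ℝ) →ₗ[ℝ] ℝ) ⊓ LinearMap.ker σ
  have hSK : vectorSpan ℝ S ≤ K := by
    rw [vectorSpan_def, Submodule.span_le]
    rintro v ⟨x, hx, y, hy, rfl⟩
    exact ⟨by simp [hk x hx, hk y hy], by simp [hσ, sum_sub_distrib, hS x hx, hS y hy]⟩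
  have : Nontrivial (Fin (n+1)) := Fin.nontrivial_iff_two_le.2 (by omega)
  obtain ⟨k', hk'⟩ := exists_ne k
  have hKσ : K < LinearMap.ker σ := by
    refine inf_le_right.lt_of_not_ge fun h => ?_
    have hv : (Pi.single k 1 - Pi.single k' 1 : Fin (n+1) → ℝ) ∈ LinearMap.ker σ := by
      simp [hσ, sum_sub_distrib]
    simpa [hk'.symm] using (h hv).1
  have hσ_top : LinearMap.ker σ < ⊤ := by
    refine lt_top_iff_ne_top.2 fun h => ?_
    have := (h ▸ Submodule.mem_top : (fun _ => (1 : ℝ)) ∈ LinearMap.ker σ)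
    exact Nat.cast_add_one_ne_zero n (by simpa [hσ] using this)
  have h₁ := Submodule.finrank_mono hSK
  have h₂ := Submodule.finrank_lt_finrank_of_lt hKσ
  have h₃ : Module.finrank ℝ (LinearMap.ker σ) < n + 1 := by
    simpa using Submodule.finrank_lt_finrank_of_lt hσ_top
  omega

theorem exists_mem_eq_and_exists_mem_eq_add_one (hn : 1 ≤ n) {S : Set (Fin (n+1) → ℝ)}
    (hS : ∀ x ∈ S, ∑ i, x i = 0) (hdim : Module.finrank ℝ (vectorSpan ℝ S) = n)
    {z : Fin (n+1) → ℝ} (hbox : ∀ v ∈ S, ∀ k, v k = z k ∨ v k = z k + 1) (k : Fin (n+1)) :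
    (∃ v ∈ S, v k = z k) ∧ ∃ v ∈ S, v k = z k + 1 := by
  constructor <;> by_contra! h
  · exact (finrank_vectorSpan_lt_of_forall_eq hn hS k _
      fun v hv => (hbox v hv k).resolve_left (h v hv)).ne hdim
  · exact (finrank_vectorSpan_lt_of_forall_eq hn hS k _
      fun v hv => (hbox v hv k).resolve_right (h v hv)).ne hdim

end Dimension

section Hypersimplex

variable {n : ℕ}

theorem exists_nat_eq_neg_sum {v w z : Fin (n+1) → ℝ} (hv : ∀ i, v i = z i ∨ v i = z i + 1)
    (hw : ∀ i, w i = z i ∨ w i = z i + 1) (hv₀ : ∑ i, v i = 0) (hw₀ : ∑ i, w i = 0)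
    {k : Fin (n+1)} (hvk : v k = z k + 1) (hwk : w k = z k) :
    ∃ s : ℕ, 1 ≤ s ∧ s ≤ n ∧ (s : ℝ) = -∑ i, z i := by
  have hcard {u : Fin (n+1) → ℝ} (hu : ∀ i, u i = z i ∨ u i = z i + 1) (hu₀ : ∑ i, u i = 0) :
      (#{i | u i - z i = 1} : ℝ) = -∑ i, z i := by
    rw [← sum_eq_card_of_forall_eq_zero_or_eq_one (w := fun i => u i - z i) fun i => by
      rcases hu i with h | h <;> simp [h], Finset.sum_sub_distrib, hu₀, zero_sub]
  have hvw : #{i | v i - z i = 1} = #{i | w i - z i = 1} := by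
    exact_mod_cast (hcard hv hv₀).trans (hcard hw hw₀).symm
  refine ⟨#{i | v i - z i = 1}, card_pos.2 ⟨k, by simp [hvk]⟩, ?_, hcard hv hv₀⟩
  rw [hvw, ← Nat.lt_succ_iff]
  simpa using card_lt_univ_of_notMem (s := {i | w i - z i = 1}) (x := k) (by simp [hwk])

theorem latticeSphere_eq_image_Wset {α c : Fin (n+1) → ℝ} {r : ℝ} {z : Fin (n+1) → ℝ}
    (hz : ∀ k, ∃ m : ℤ, z k = m)
    (hbox : ∀ v ∈ latticeSphere n α c r, ∀ k, v k = z k ∨ v k = z k + 1)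
    {b : ℝ} (hb : ∀ k, α k * (2 * (z k - c k) + 1) = b) {s : ℕ} (hs : (s : ℝ) = -∑ k, z k)
    {x₀ : Fin (n+1) → ℝ} (hx₀ : x₀ ∈ latticeSphere n α c r) :
    latticeSphere n α c r = (fun w => z + w) '' Wset n s := by
  have hq : ∀ w ∈ Wset n s, qForm α (z + w - c) = qForm α (z - c) + b * s := by
    rintro w ⟨hw, hws⟩
    rw [add_sub_right_comm, qForm_add_of_forall_eq_zero_or_eq_one _ _ hw]
    simp only [Pi.sub_apply, hb, ← mul_sum, hws]
  have hsub : ∀ v ∈ latticeSphere n α c r, v - z ∈ Wset n s := fun v hv =>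
    ⟨fun k => by rcases hbox v hv k with h | h <;> simp [h],
      by simp [sum_sub_distrib, hv.1.2, hs]⟩
  ext v
  constructor
  · exact fun hv => ⟨v - z, hsub v hv, add_sub_cancel _ _⟩
  rintro ⟨w, hw, rfl⟩
  refine ⟨⟨fun k => ?_, by simp [sum_add_distrib, hw.2, hs]⟩, ?_⟩
  · obtain ⟨m, hm⟩ := hz k
    rcases hw.1 k with h | h
    · exact ⟨m, by simp [hm, h]⟩
    · exact ⟨m + 1, by simp [hm, h]⟩
  · rw [hq w hw, ← hq _ (hsub x₀ hx₀), add_sub_cancel, hx₀.2]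

end Hypersimplex

theorem delaunay_of_An_is_hypersimplex (n : ℕ) (hn : 1 ≤ n)
    (α : Fin (n+1) → ℝ) (hα : ∀ i, 0 < α i)
    (c : Fin (n+1) → ℝ) (r : ℝ)
    (D : Set (Fin (n+1) → ℝ))
    (hD : D = convexHull ℝ {x ∈ latticeA n | qForm α (x - c) = r})
    (hdim : Module.finrank ℝ (vectorSpan ℝ D) = n)
    (hempty : ∀ x ∈ latticeA n, r ≤ qForm α (x - c)) :
    ∃ s : ℕ, 1 ≤ s ∧ s ≤ n ∧ ∃ z : Fin (n+1) → ℝ,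
      D = (fun x => z + x) '' convexHull ℝ (Wset n s) := by
  change D = convexHull ℝ (latticeSphere n α c r) at hD
  rw [hD, ← direction_affineSpan, affineSpan_convexHull, direction_affineSpan] at hdim
  have hS : ∀ x ∈ latticeSphere n α c r, ∑ i, x i = 0 := fun x hx => hx.1.2
  obtain ⟨z, hz, hbox⟩ := exists_forall_mem_latticeSphere_eq_or_eq_add_one hα hempty
  have hvals := exists_mem_eq_and_exists_mem_eq_add_one hn hS hdim hbox
  obtain ⟨b, hb⟩ :=
    exists_forall_weight_eq hempty hbox (fun k => (hvals k).1) (fun k => (hvals k).2)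
  obtain ⟨v, hv, hv0⟩ := (hvals 0).2
  obtain ⟨w, hw, hw0⟩ := (hvals 0).1
  obtain ⟨s, hs1, hsn, hs⟩ :=
    exists_nat_eq_neg_sum (hbox v hv) (hbox w hw) (hS v hv) (hS w hw) hv0 hw0
  refine ⟨s, hs1, hsn, z, ?_⟩
  rw [hD, latticeSphere_eq_image_Wset hz hbox hb hs hv]
  exact convexHull_vadd z (Wset n s)
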